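/- Assume the execution is admissible. Let s ∈ ℕ be such that every directed cycle has nonnegative ω^s-weight. Then for every node v ∈ V and all times t < t', Ψ_v^s(t') ≤ Ψ_v^s(t) + (ϑ−1)·(t'−t). -/

import Mathlib

/-!
Under nonnegative cycle weights every closed walk has nonnegative `ω^s`-weight, so the infimum
`d(v, w)` of the weights of walks from `v` to `w` is attained (by a path) and
`Ψ_v^s(t) = max_w (L_w(t) - L_v(t) - d(v, w))` is a maximum of finitely many differentiable
functions. If `w ≠ v` attains it, then `w` is at least `4s·δ` ahead (after the offset `O`) of the
neighbor preceding it on a lightest walk and at most `4s·δ` behind any neighbor: the slow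
condition holds at `w`, so `L_w' ≤ ϑ`, while `L_v' ≥ 1`. Every function attaining the maximum
thus grows at rate at most `ϑ - 1`, and so does the maximum.
-/

open SimpleGraph

namespace GCS

variable {V : Type*}

def edgeWt (δ O : V → V → ℝ) (s : ℝ) (v w : V) : ℝ :=
  4 * s * δ v w - O v w

def walkWt {G : SimpleGraph V} (δ O : V → V → ℝ) (s : ℝ) {v w : V}
    (p : G.Walk v w) : ℝ :=
  (p.darts.map fun d => edgeWt δ O s d.toProd.1 d.toProd.2).sum

def NonnegCycles (G : SimpleGraph V) (δ O : V → V → ℝ) (s : ℝ) : Prop :=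
  ∀ (v : V) (c : G.Walk v v), c.IsCycle → 0 ≤ walkWt δ O s c

noncomputable def dS (G : SimpleGraph V) (δ O : V → V → ℝ) (s : ℝ) (v w : V) : ℝ :=
  sInf {x : ℝ | ∃ p : G.Walk v w, walkWt δ O s p = x}

noncomputable def Psi (G : SimpleGraph V) (δ O : V → V → ℝ) (s : ℝ)
    (L : V → ℝ → ℝ) (v : V) (t : ℝ) : ℝ :=
  sSup {x : ℝ | ∃ w : V, ∃ p : G.Walk v w, x = L w t - L v t - walkWt δ O s p}

noncomputable def PsiAll (G : SimpleGraph V) (δ O : V → V → ℝ) (s : ℝ)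
    (L : V → ℝ → ℝ) (t : ℝ) : ℝ :=
  ⨆ v : V, Psi G δ O s L v t

noncomputable def PsiE (G : SimpleGraph V) (δ O : V → V → ℝ) (s : ℝ)
    (L : V → ℝ → ℝ) (v : V) (t : ℝ) : EReal :=
  ⨆ w : V, ⨆ p : G.Walk v w, ((L w t - L v t - walkWt δ O s p : ℝ) : EReal)

def SlowCondAt (G : SimpleGraph V) (δ O : V → V → ℝ) (L : V → ℝ → ℝ)
    (v : V) (t : ℝ) (s : ℕ) : Prop :=
  (∃ w, G.Adj v w ∧ 4 * (s : ℝ) * δ v w ≤ L v t - L w t - O v w) ∧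
  (∀ w, G.Adj v w → -(4 * (s : ℝ) * δ v w) ≤ L v t - L w t - O v w)

def FastCondAt (G : SimpleGraph V) (δ O : V → V → ℝ) (L : V → ℝ → ℝ)
    (v : V) (t : ℝ) (s : ℕ) : Prop :=
  (∃ w, G.Adj v w ∧ L v t - L w t - O v w ≤ -((4 * (s : ℝ) + 2) * δ v w)) ∧
  (∀ w, G.Adj v w → L v t - L w t - O v w ≤ (4 * (s : ℝ) + 2) * δ v w)

def Admissible (G : SimpleGraph V) (δ O : V → V → ℝ) (L : V → ℝ → ℝ)
    (ϑ μ : ℝ) : Prop :=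
  ∀ (v : V) (t : ℝ),
    ((∃ s : ℕ, SlowCondAt G δ O L v t s) → deriv (L v) t ≤ ϑ) ∧
    ((∃ s : ℕ, FastCondAt G δ O L v t s) → 1 + μ ≤ deriv (L v) t)

def AdmissibleOn (G : SimpleGraph V) (δ O : V → V → ℝ) (L : V → ℝ → ℝ)
    (ϑ μ : ℝ) (a b : ℝ) : Prop :=
  ∀ (v : V), ∀ t ∈ Set.Icc a b,
    ((∃ s : ℕ, SlowCondAt G δ O L v t s) → deriv (L v) t ≤ ϑ) ∧
    ((∃ s : ℕ, FastCondAt G δ O L v t s) → 1 + μ ≤ deriv (L v) t)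

end GCS

section SupOfFunctions

open Topology

variable {ι : Type*} {S : Finset ι} (hS : S.Nonempty) {f : ι → ℝ → ℝ}

theorem eventually_sup'_eq_imp_sup'_eq {x : ℝ} (hf : ∀ i ∈ S, ContinuousAt (f i) x) :
    ∀ᶠ z in 𝓝 x, ∀ i ∈ S, f i z = S.sup' hS (f · z) → f i x = S.sup' hS (f · x) := by
  rw [Filter.eventually_all_finset]
  intro i hi
  rcases (S.le_sup' (f · x) hi).eq_or_lt with h | h
  · exact .of_forall fun _ _ => h
  · filter_upwards [(hf i hi).eventually_lt (ContinuousAt.finset_sup'_apply hS hf) h]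
      with z hz hz' using absurd hz' hz.ne

/-- Near `x`, the maximum is attained only by functions already maximal at `x`, so its right
slopes are slopes of those functions. -/
theorem sup'_le_sup'_add_mul_of_hasDerivAt {f' : ι → ℝ → ℝ} {B a b : ℝ}
    (hf : ∀ i ∈ S, ∀ x, HasDerivAt (f i) (f' i x) x)
    (hB : ∀ x ∈ Set.Ico a b, ∀ i ∈ S, f i x = S.sup' hS (f · x) → f' i x ≤ B) (hab : a ≤ b) :
    S.sup' hS (f · b) ≤ S.sup' hS (f · a) + B * (b - a) := by
  set F := fun x => S.sup' hS (f · x) with hF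
  have hFc : Continuous F :=
    Continuous.finset_sup'_apply hS fun i hi => continuous_iff_continuousAt.2 fun x =>
      (hf i hi x).continuousAt
  refine image_le_of_liminf_slope_right_le_deriv_boundary (B := fun x => F a + B * (x - a))
    (B' := fun _ => B) hFc.continuousOn (by simp) (by fun_prop) (fun x _ => ?_)
    (fun x hx r hr => ?_) ⟨hab, le_rfl⟩
  · simpa using (((hasDerivAt_id x).sub_const a).const_mul B).const_add (F a) |>.hasDerivWithinAt
  have hslope : ∀ᶠ z in 𝓝[>] x, ∀ i ∈ S, f i x = F x → slope (f i) x z < r := by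
    rw [Filter.eventually_all_finset]
    intro i hi
    by_cases hact : f i x = F x
    · have hlim := (hf i hi x).tendsto_slope.mono_left
        (nhdsWithin_mono x fun z (hz : x < z) => hz.ne')
      exact (hlim.eventually_lt_const ((hB x hx i hi hact).trans_lt hr)).mono fun _ hz _ => hz
    · exact .of_forall fun _ h => absurd h hact
  have hmax := nhdsWithin_le_nhds (s := Set.Ioi x) (eventually_sup'_eq_imp_sup'_eq hS fun i hi =>
    (hf i hi x).continuousAt)
  refine (hslope.and hmax).frequently.mono ?_
  rintro z ⟨hz_slope, hz_max⟩
  obtain ⟨i, hi, hiz⟩ := S.exists_mem_eq_sup' hS (f · z)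
  have hix := hz_max i hi hiz.symm
  have hFi : slope F x z = slope (f i) x z := by
    simp only [slope_def_field, hF, ← hiz, ← hix]
  exact hFi ▸ hz_slope i hi hix

end SupOfFunctions

namespace GCS

variable {V : Type*} {G : SimpleGraph V} {δ O : V → V → ℝ} {s : ℝ}

@[simp]
lemma walkWt_nil {v : V} : walkWt δ O s (Walk.nil : G.Walk v v) = 0 := rfl

@[simp]
lemma walkWt_cons {u v w : V} (h : G.Adj u v) (p : G.Walk v w) :
    walkWt δ O s (Walk.cons h p) = edgeWt δ O s u v + walkWt δ O s p := by
  simp [walkWt]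

lemma walkWt_append {u v w : V} (p : G.Walk u v) (q : G.Walk v w) :
    walkWt δ O s (p.append q) = walkWt δ O s p + walkWt δ O s q := by
  simp [walkWt, Walk.darts_append]

lemma walkWt_concat {u v w : V} (p : G.Walk u v) (h : G.Adj v w) :
    walkWt δ O s (p.concat h) = walkWt δ O s p + edgeWt δ O s v w := by
  simp [walkWt, Walk.darts_concat]

lemma edgeWt_add_edgeWt_swap {v w : V} (hδsym : δ v w = δ w v) (hOanti : O v w = -O w v) :
    edgeWt δ O s v w + edgeWt δ O s w v = 8 * s * δ v w := by
  simp only [edgeWt, hδsym, hOanti]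
  ring

/-- A closed walk that is an edge followed by a path is a cycle unless it just walks the edge
back and forth; `NonnegCycles` only covers the first case. -/
lemma walkWt_cons_nonneg_of_isPath (hs : 0 ≤ s) (hnc : NonnegCycles G δ O s) {u v : V}
    (h : G.Adj u v) (hδ : 0 ≤ δ u v) (hδsym : δ u v = δ v u) (hOanti : O u v = -O v u)
    {q : G.Walk v u} (hq : q.IsPath) : 0 ≤ walkWt δ O s (Walk.cons h q) := by
  by_cases he : s(u, v) ∈ q.edges
  · rw [hq.eq_adj_toWalk_of_mem_edges (Sym2.eq_swap ▸ he)]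
    simp only [Adj.toWalk, walkWt_cons, walkWt_nil, add_zero,
      edgeWt_add_edgeWt_swap hδsym hOanti]
    positivity
  · exact hnc u _ ((Walk.cons_isCycle_iff q h).2 ⟨hq, he⟩)

lemma walkWt_bypass_le [DecidableEq V]
    (hpath : ∀ ⦃u v : V⦄ (h : G.Adj u v) (q : G.Walk v u), q.IsPath →
      0 ≤ walkWt δ O s (Walk.cons h q))
    {u v : V} (p : G.Walk u v) : walkWt δ O s p.bypass ≤ walkWt δ O s p := by
  induction p with
  | nil => simp [Walk.bypass]
  | @cons a b c h p ih =>
    rw [Walk.bypass]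
    split_ifs with hmem
    · have hsplit := congrArg (walkWt δ O s) (p.bypass.take_spec hmem)
      have hloop := hpath h _ (p.bypass_isPath.takeUntil hmem)
      rw [walkWt_append] at hsplit
      rw [walkWt_cons] at hloop ⊢
      linarith
    · simp only [walkWt_cons]
      linarith

def NonnegClosedWalks (G : SimpleGraph V) (δ O : V → V → ℝ) (s : ℝ) : Prop :=
  ∀ (v : V) (c : G.Walk v v), 0 ≤ walkWt δ O s c

/-- The bypass of a closed walk is empty, and bypassing never adds weight. -/
theorem NonnegCycles.nonnegClosedWalks (hnc : NonnegCycles G δ O s) (hs : 0 ≤ s)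
    (hδ : ∀ v w, G.Adj v w → 0 ≤ δ v w) (hδsym : ∀ v w, G.Adj v w → δ v w = δ w v)
    (hOanti : ∀ v w, G.Adj v w → O v w = -O w v) : NonnegClosedWalks G δ O s := by
  classical
  intro v c
  have h := walkWt_bypass_le (fun u w h _ hq =>
    walkWt_cons_nonneg_of_isPath hs hnc h (hδ u w h) (hδsym u w h) (hOanti u w h) hq) c
  rwa [(Walk.isPath_iff_nil.1 c.bypass_isPath).eq_nil, walkWt_nil] at h

namespace NonnegClosedWalks

variable [Fintype V] (hG : NonnegClosedWalks G δ O s)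
include hG

/-- The minimum is taken over the finitely many paths: every walk is at least as heavy as its
bypass. -/
theorem exists_isLeast_walkWt {v w : V} (hr : G.Reachable v w) :
    ∃ p : G.Walk v w, IsLeast (Set.range (walkWt δ O s : G.Walk v w → ℝ)) (walkWt δ O s p) := by
  classical
  obtain ⟨q⟩ := hr
  obtain ⟨p, -, hp⟩ := Finset.univ.exists_min_image (fun p : G.Path v w => walkWt δ O s p.1)
    ⟨⟨q.bypass, q.bypass_isPath⟩, Finset.mem_univ _⟩
  refine ⟨p.1, ⟨p.1, rfl⟩, ?_⟩
  rintro _ ⟨r, rfl⟩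
  exact (hp ⟨r.bypass, r.bypass_isPath⟩ (Finset.mem_univ _)).trans
    (walkWt_bypass_le (fun _ _ h q _ => hG _ (Walk.cons h q)) r)

theorem dS_le_walkWt {v w : V} (p : G.Walk v w) : dS G δ O s v w ≤ walkWt δ O s p := by
  obtain ⟨_, hq⟩ := hG.exists_isLeast_walkWt ⟨p⟩
  exact hq.csInf_eq.trans_le (hq.2 ⟨p, rfl⟩)

theorem exists_walkWt_eq_dS {v w : V} (hr : G.Reachable v w) :
    ∃ p : G.Walk v w, walkWt δ O s p = dS G δ O s v w := by
  obtain ⟨p, hp⟩ := hG.exists_isLeast_walkWt hr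
  exact ⟨p, hp.csInf_eq.symm⟩

theorem dS_le_dS_add_edgeWt {u v w : V} (hr : G.Reachable v w) (h : G.Adj w u) :
    dS G δ O s v u ≤ dS G δ O s v w + edgeWt δ O s w u := by
  obtain ⟨p, hp⟩ := hG.exists_walkWt_eq_dS hr
  simpa [walkWt_concat, hp] using hG.dS_le_walkWt (p.concat h)

theorem exists_adj_dS_eq_dS_add_edgeWt {v w : V} (hr : G.Reachable v w) (hvw : v ≠ w) :
    ∃ u, G.Adj u w ∧ dS G δ O s v w = dS G δ O s v u + edgeWt δ O s u w := by
  obtain ⟨p, hp⟩ := hG.exists_walkWt_eq_dS hr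
  have hnil : ¬ p.Nil := Walk.not_nil_of_ne hvw
  have hlast := hG.dS_le_walkWt p.dropLast
  have hsplit := walkWt_concat (δ := δ) (O := O) (s := s) p.dropLast (p.adj_penultimate hnil)
  rw [Walk.concat_dropLast] at hsplit
  refine ⟨p.penultimate, p.adj_penultimate hnil,
    le_antisymm (hG.dS_le_dS_add_edgeWt ⟨p.dropLast⟩ (p.adj_penultimate hnil)) ?_⟩
  linarith

theorem psi_eq_sup' (hconn : G.Connected) (L : V → ℝ → ℝ) (v : V) (t : ℝ) :
    Psi G δ O s L v t =
      Finset.univ.sup' ⟨v, Finset.mem_univ v⟩ fun w => L w t - L v t - dS G δ O s v w := by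
  apply IsGreatest.csSup_eq
  constructor
  · obtain ⟨w, -, hw⟩ := Finset.univ.exists_mem_eq_sup' ⟨v, Finset.mem_univ v⟩
      fun w => L w t - L v t - dS G δ O s v w
    obtain ⟨p, hp⟩ := hG.exists_walkWt_eq_dS (hconn.preconnected v w)
    exact ⟨w, p, by rw [hw, hp]⟩
  · rintro _ ⟨w, p, rfl⟩
    have hp := hG.dS_le_walkWt p
    have hw := Finset.le_sup' (fun w => L w t - L v t - dS G δ O s v w) (Finset.mem_univ w)
    linarith

end NonnegClosedWalks

/-- The neighbor witnessing the slow condition is the one preceding `w` on a lightest walk from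
`v`. -/
theorem slowCondAt_of_forall_le [Fintype V] {k : ℕ} (hG : NonnegClosedWalks G δ O k)
    (hconn : G.Connected) (hδsym : ∀ v w, G.Adj v w → δ v w = δ w v)
    (hOanti : ∀ v w, G.Adj v w → O v w = -O w v) {L : V → ℝ → ℝ} {v w : V} {t : ℝ}
    (hvw : v ≠ w) (hmax : ∀ u, L u t - dS G δ O k v u ≤ L w t - dS G δ O k v w) :
    SlowCondAt G δ O L w t k := by
  refine ⟨?_, fun u hwu => ?_⟩
  · obtain ⟨u, huw, hu⟩ := hG.exists_adj_dS_eq_dS_add_edgeWt (hconn.preconnected v w) hvw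
    have hu_le := hmax u
    simp only [edgeWt, hδsym u w huw, hOanti u w huw] at hu
    exact ⟨u, huw.symm, by linarith⟩
  · have hu := hG.dS_le_dS_add_edgeWt (hconn.preconnected v w) hwu
    have hu_le := hmax u
    simp only [edgeWt] at hu
    linarith

end GCS


theorem waitup_cor_general
    {V : Type*} [Fintype V]
    (G : SimpleGraph V) (hconn : G.Connected)
    (δ O : V → V → ℝ)
    (hδpos : ∀ v w, G.Adj v w → 0 < δ v w)
    (hδsym : ∀ v w, G.Adj v w → δ v w = δ w v)
    (hOanti : ∀ v w, G.Adj v w → O v w = -O w v)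
    (L : V → ℝ → ℝ) (ϑ μ : ℝ) (hϑ : 1 < ϑ)
    (hdiff : ∀ v, Differentiable ℝ (L v))
    (hlo : ∀ (v : V) (t : ℝ), 1 ≤ deriv (L v) t)
    (hadm : GCS.Admissible G δ O L ϑ μ)
    (s : ℕ) (hnc : GCS.NonnegCycles G δ O (s : ℝ))
    (v : V) (t t' : ℝ) (htt' : t < t') :
    GCS.Psi G δ O (s : ℝ) L v t' ≤
      GCS.Psi G δ O (s : ℝ) L v t + (ϑ - 1) * (t' - t) := by
  have hG := hnc.nonnegClosedWalks (Nat.cast_nonneg s) (fun v w h => (hδpos v w h).le)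
    hδsym hOanti
  rw [hG.psi_eq_sup' hconn, hG.psi_eq_sup' hconn]
  refine sup'_le_sup'_add_mul_of_hasDerivAt _
    (f := fun w x => L w x - L v x - GCS.dS G δ O s v w)
    (f' := fun w x => deriv (L w) x - deriv (L v) x)
    (fun w _ x => ((hdiff w x).hasDerivAt.sub (hdiff v x).hasDerivAt).sub_const _)
    (fun x _ w _ hw => ?_) htt'.le
  rcases eq_or_ne v w with rfl | hvw
  · simpa using hϑ.le
  have hmax (u : V) : L u x - GCS.dS G δ O s v u ≤ L w x - GCS.dS G δ O s v w := by
    have hu := Finset.le_sup' (fun u => L u x - L v x - GCS.dS G δ O s v u) (Finset.mem_univ u)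
    linarith
  have hslow := GCS.slowCondAt_of_forall_le hG hconn hδsym hOanti hvw hmax
  linarith [(hadm w x).1 ⟨s, hslow⟩, hlo v x]

/-- `Ψ_v^s(t') ≤ Ψ_v^s(t) + (ϑ-1)(t'-t)` for all `v` and `t < t'`. -/
theorem waitup_cor
    {V : Type*} [Fintype V] [DecidableEq V] [Nonempty V]
    (G : SimpleGraph V) (hconn : G.Connected)
    (δ O : V → V → ℝ)
    (hδpos : ∀ v w, G.Adj v w → 0 < δ v w)
    (hδsym : ∀ v w, G.Adj v w → δ v w = δ w v)
    (hOanti : ∀ v w, G.Adj v w → O v w = -O w v)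
    (L : V → ℝ → ℝ) (ϑ μ : ℝ) (hϑ : 1 < ϑ) (hμ : 0 < μ)
    (hdiff : ∀ v, Differentiable ℝ (L v))
    (hlo : ∀ (v : V) (t : ℝ), 1 ≤ deriv (L v) t)
    (hhi : ∀ (v : V) (t : ℝ), deriv (L v) t ≤ ϑ * (1 + μ))
    (hadm : GCS.Admissible G δ O L ϑ μ)
    (s : ℕ) (hnc : GCS.NonnegCycles G δ O (s : ℝ))
    (v : V) (t t' : ℝ) (htt' : t < t') :
    GCS.Psi G δ O (s : ℝ) L v t' ≤
      GCS.Psi G δ O (s : ℝ) L v t + (ϑ - 1) * (t' - t) :=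
  waitup_cor_general G hconn δ O hδpos hδsym hOanti L ϑ μ hϑ hdiff hlo hadm s hnc v t t' htt'
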